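/- Let E₁,...,E_n (n finite) be pairwise commuting effects on a complex Hilbert space with ∑_{i=1}^n E_i² ≤ I, and let F^m_{k₁,...,k_n} = ∏_i P^{E_i}((k_i/m,(k_i+1)/m]) be nonzero for some nonnegative integers k₁,...,k_n ≤ m. Then ∑_{i=1}^n k_i² ≤ m². -/

import Mathlib

/-- A projection-valued (spectral) measure for the operator `A`. -/
structure IsSpectralMeasure {H : Type*} [NormedAddCommGroup H] [InnerProductSpace ℂ H]
    [CompleteSpace H] (A : H →L[ℂ] H) (P : Set ℝ → H →L[ℂ] H) : Prop where
  isIdem : ∀ s, IsIdempotentElem (P s)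
  selfAdj : ∀ s, IsSelfAdjoint (P s)
  empty : P ∅ = 0
  univ : P Set.univ = 1
  inter : ∀ s t, P (s ∩ t) = P s * P t
  hasSum : ∀ (s : ℕ → Set ℝ), Pairwise (Function.onFun Disjoint s) →
    ∀ x, HasSum (fun n => P (s n) x) (P (⋃ n, s n) x)
  commutes : ∀ s, A * P s = P s * A
  smul_le : ∀ a b : ℝ, (a : ℂ) • P (Set.Ioc a b) ≤ P (Set.Ioc a b) * A * P (Set.Ioc a b)
  le_smul : ∀ a b : ℝ, P (Set.Ioc a b) * A * P (Set.Ioc a b) ≤ (b : ℂ) • P (Set.Ioc a b)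
/-- The product of spectral projections `F^m_{k₁,…,k_n} = ∏ᵢ P^{Eᵢ}((kᵢ/m,(kᵢ+1)/m])`. -/
noncomputable def Fproj {H : Type*} [NormedAddCommGroup H] [InnerProductSpace ℂ H]
    [CompleteSpace H] {n : ℕ} (P : Fin n → Set ℝ → H →L[ℂ] H) (m : ℕ) (k : Fin n → ℕ) :
    H →L[ℂ] H :=
  (List.ofFn fun i => P i (Set.Ioc ((k i : ℝ) / m) (((k i : ℝ) + 1) / m))).prod

/-!
Pick `y = F x ≠ 0`. Every spectral projection `P^{Eᵢ}((kᵢ/m,(kᵢ+1)/m])` fixes `y`, and on the range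
of that projection `Eᵢ ≥ kᵢ/m`, so `(kᵢ/m) ‖y‖ ≤ ‖Eᵢ y‖`. Summing squares and using
`∑ ‖Eᵢ y‖² = ⟪∑ Eᵢ² y, y⟫ ≤ ‖y‖²` gives `∑ (kᵢ/m)² ≤ 1`.
-/

open scoped InnerProductSpace

theorem IsIdempotentElem.mul_list_prod_of_mem {M : Type*} [Monoid M] {p : M}
    (hp : IsIdempotentElem p) {L : List M} (hpL : p ∈ L) (hcomm : ∀ q ∈ L, Commute p q) :
    p * L.prod = L.prod := by
  obtain ⟨L₁, L₂, rfl⟩ := List.append_of_mem hpL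
  have h₁ : Commute p L₁.prod :=
    Commute.list_prod_right _ _ fun q hq => hcomm q (List.mem_append_left _ hq)
  rw [List.prod_append, List.prod_cons, ← mul_assoc, h₁.eq, mul_assoc, ← mul_assoc p p, hp.eq]

namespace ContinuousLinearMap

variable {𝕜 E : Type*} [RCLike 𝕜] [NormedAddCommGroup E] [InnerProductSpace 𝕜 E]

theorem re_inner_apply_le_of_le {S T : E →L[𝕜] E} (h : S ≤ T) (x : E) :
    RCLike.re ⟪S x, x⟫_𝕜 ≤ RCLike.re ⟪T x, x⟫_𝕜 := by
  have := (le_def S T).mp h |>.re_inner_nonneg_left x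
  rwa [sub_apply, inner_sub_left, map_sub, sub_nonneg] at this

variable [CompleteSpace E]

theorem _root_.IsSelfAdjoint.norm_apply_sq_eq_re_inner {T : E →L[𝕜] E} (hT : IsSelfAdjoint T)
    (x : E) : ‖T x‖ ^ 2 = RCLike.re ⟪T (T x), x⟫_𝕜 := by
  rw [apply_norm_sq_eq_inner_adjoint_left, hT.adjoint_eq]
  rfl

theorem sum_norm_apply_sq_le_of_sum_mul_self_le_one {ι : Type*} [Fintype ι]
    {A : ι → E →L[𝕜] E} (hA : ∀ i, IsSelfAdjoint (A i)) (h : ∑ i, A i * A i ≤ 1) (x : E) :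
    ∑ i, ‖A i x‖ ^ 2 ≤ ‖x‖ ^ 2 := by
  have := re_inner_apply_le_of_le h x
  simpa [sum_apply, sum_inner, inner_self_eq_norm_sq, ← (hA _).norm_apply_sq_eq_re_inner]
    using this

theorem mul_norm_le_norm_apply_of_smul_le_compression {Q A : E →L[𝕜] E} (hQ : IsSelfAdjoint Q)
    {a : ℝ} (h : (a : 𝕜) • Q ≤ Q * A * Q) {x : E} (hx : Q x = x) :
    a * ‖x‖ ≤ ‖A x‖ := by
  have hcompr : RCLike.re ⟪(Q * A * Q) x, x⟫_𝕜 = RCLike.re ⟪A x, x⟫_𝕜 := by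
    rw [mul_apply_eq_comp, mul_apply_eq_comp, hx, ← hQ.adjoint_eq, adjoint_inner_left, hx]
  have hre : a * ‖x‖ ^ 2 ≤ ‖A x‖ * ‖x‖ := by
    have := re_inner_apply_le_of_le h x
    rw [hcompr, _root_.smul_apply, hx, inner_smul_left, inner_self_eq_norm_sq_to_K,
      RCLike.conj_ofReal, ← RCLike.ofReal_pow, ← RCLike.ofReal_mul, RCLike.ofReal_re] at this
    exact this.trans (re_inner_le_norm _ _)
  rcases (norm_nonneg x).eq_or_lt with hx0 | hx0
  · rw [← hx0, mul_zero]
    exact norm_nonneg _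
  · nlinarith

end ContinuousLinearMap

theorem apply_Fproj_apply_of_isIdempotentElem {H : Type*} [NormedAddCommGroup H]
    [InnerProductSpace ℂ H] [CompleteSpace H] {n : ℕ} {P : Fin n → Set ℝ → H →L[ℂ] H}
    (hidem : ∀ i s, IsIdempotentElem (P i s)) (hPcomm : ∀ i j s t, P i s * P j t = P j t * P i s)
    (m : ℕ) (k : Fin n → ℕ) (i : Fin n) (x : H) :
    P i (Set.Ioc ((k i : ℝ) / m) (((k i : ℝ) + 1) / m)) (Fproj P m k x) = Fproj P m k x := by
  refine DFunLike.congr_fun ((hidem i _).mul_list_prod_of_mem (List.mem_ofFn.mpr ⟨i, rfl⟩) ?_) x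
  intro _ hq
  obtain ⟨j, rfl⟩ := List.mem_ofFn.mp hq
  exact hPcomm i j _ _

theorem sum_sq_le_of_Fproj_ne_zero_general {H : Type*} [NormedAddCommGroup H]
    [InnerProductSpace ℂ H] [CompleteSpace H] {n : ℕ}
    (E : Fin n → H →L[ℂ] H) (P : Fin n → Set ℝ → H →L[ℂ] H)
    (heff : ∀ i, 0 ≤ E i ∧ E i ≤ 1)
    (hP : ∀ i, IsSpectralMeasure (E i) (P i))
    (hPcomm : ∀ i j s t, P i s * P j t = P j t * P i s)
    (hsum : ∑ i, E i * E i ≤ 1)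
    (m : ℕ) (hm : 0 < m) (k : Fin n → ℕ)
    (hF : Fproj P m k ≠ 0) :
    ∑ i, (k i) ^ 2 ≤ m ^ 2 := by
  obtain ⟨x, hx⟩ : ∃ x, Fproj P m k x ≠ 0 := by
    by_contra! h
    exact hF (ContinuousLinearMap.ext h)
  set y := Fproj P m k x
  have hlow : ∀ i, ((k i : ℝ) / m) ^ 2 * ‖y‖ ^ 2 ≤ ‖E i y‖ ^ 2 := fun i => by
    have hfix := apply_Fproj_apply_of_isIdempotentElem (fun j => (hP j).isIdem) hPcomm m k i x
    have hlin : (k i : ℝ) / m * ‖y‖ ≤ ‖E i y‖ :=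
      ContinuousLinearMap.mul_norm_le_norm_apply_of_smul_le_compression
        ((hP i).selfAdj _) ((hP i).smul_le _ _) hfix
    rw [← mul_pow]
    exact pow_le_pow_left₀ (by positivity) hlin 2
  have hup := ContinuousLinearMap.sum_norm_apply_sq_le_of_sum_mul_self_le_one
    (fun i => IsSelfAdjoint.of_nonneg (heff i).1) hsum y
  have hratio : ∑ i, ((k i : ℝ) / m) ^ 2 ≤ 1 := by
    refine le_of_mul_le_mul_right ?_ (by positivity : 0 < ‖y‖ ^ 2)
    rw [Finset.sum_mul, one_mul]
    exact (Finset.sum_le_sum fun i _ => hlow i).trans hup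
  simp_rw [div_pow] at hratio
  rw [← Finset.sum_div, div_le_one (by positivity)] at hratio
  exact_mod_cast hratio

/-- If `∑ Eᵢ² ≤ I` and `F^m_{k₁,…,k_n} ≠ 0`, then `∑ kᵢ² ≤ m²`. -/
theorem sum_sq_le_of_Fproj_ne_zero {H : Type*} [NormedAddCommGroup H]
    [InnerProductSpace ℂ H] [CompleteSpace H] {n : ℕ}
    (E : Fin n → H →L[ℂ] H) (P : Fin n → Set ℝ → H →L[ℂ] H)
    (heff : ∀ i, 0 ≤ E i ∧ E i ≤ 1)
    (hcomm : ∀ i j, E i * E j = E j * E i)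
    (hP : ∀ i, IsSpectralMeasure (E i) (P i))
    (hPcomm : ∀ i j s t, P i s * P j t = P j t * P i s)
    (hsum : ∑ i, E i * E i ≤ 1)
    (m : ℕ) (hm : 0 < m) (k : Fin n → ℕ) (hk : ∀ i, k i ≤ m)
    (hF : Fproj P m k ≠ 0) :
    ∑ i, (k i) ^ 2 ≤ m ^ 2 :=
  sum_sq_le_of_Fproj_ne_zero_general E P heff hP hPcomm hsum m hm k hF
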